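/- arXiv:2103.16124 — 2 statements merged into one kernel-verified Lean document; each statement's English description precedes it below -/
import Mathlib

section
/- For every positive integer N and n ≥ 1, B_{N,n} equals (-1)^n · n! times the determinant of the n×n matrix M where M_{i,j} = N!/(N+i-j+1)! when i ≥ j, M_{i,j} = 1 when j = i+1, and M_{i,j} = 0 when j > i+1. -/
open PowerSeries Finset

noncomputable def eSer (c : ℂ) : PowerSeries ℂ := PowerSeries.mk fun n => c ^ n / n.factorial

noncomputable def dSer (N f : ℕ) : PowerSeries ℂ :=
  PowerSeries.mk fun m => (N.factorial : ℂ) * (f : ℂ) ^ m / (N + m).factorial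

noncomputable def hB (N n : ℕ) : ℂ :=
  n.factorial * PowerSeries.coeff (R := ℂ) n (dSer N 1)⁻¹

noncomputable def hBP (N n : ℕ) (x : ℂ) : ℂ :=
  n.factorial * PowerSeries.coeff (R := ℂ) n (eSer x * (dSer N 1)⁻¹)

noncomputable def gBP (N f : ℕ) (χ : DirichletCharacter ℂ f) (n : ℕ) (x : ℂ) : ℂ :=
  n.factorial * PowerSeries.coeff (R := ℂ) n
    (((f : ℂ) ^ N)⁻¹ • ((∑ a ∈ Finset.Icc 1 f, (PowerSeries.C (R := ℂ) (χ (a : ZMod f))) * eSer (x + a)) * (dSer N f)⁻¹))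

noncomputable def gB (N f : ℕ) (χ : DirichletCharacter ℂ f) (n : ℕ) : ℂ := gBP N f χ n 0

/-! If `e * d = 1` and `constantCoeff d = 1`, the coefficient vector of `e` solves the
unitriangular Toeplitz system `L *ᵥ b = e₀` of `d`. Since `det L = 1`, Cramer's rule makes the
last coefficient of `e` a cofactor of `L`, and deleting the first row and the last column of `L`
leaves the Hessenberg matrix of `d`. The definition of `B_{N,n}` is the case
`d = ∑ N! t^m / (N + m)!`, whose Hessenberg matrix is the one in the statement. -/

noncomputable section

namespace PowerSeries

open Matrix

variable {R : Type*} [CommRing R]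

def lowerToeplitz (d : R⟦X⟧) (n : ℕ) : Matrix (Fin n) (Fin n) R :=
  of fun i j => if (j : ℕ) ≤ i then coeff ((i : ℕ) - j) d else 0

def hessenberg (d : R⟦X⟧) (n : ℕ) : Matrix (Fin n) (Fin n) R :=
  of fun i j => if (j : ℕ) ≤ i + 1 then coeff ((i : ℕ) + 1 - j) d else 0

theorem lowerToeplitz_mulVec_coeff (d e : R⟦X⟧) {n : ℕ} (i : Fin n) :
    (lowerToeplitz d n *ᵥ fun j => coeff j e) i = coeff i (e * d) := by
  have hrange : (range n).filter (· ≤ (i : ℕ)) = range ((i : ℕ) + 1) := by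
    ext k; simp only [mem_filter, mem_range]; omega
  calc (lowerToeplitz d n *ᵥ fun j => coeff j e) i
      = ∑ k ∈ range n, if k ≤ i then coeff ((i : ℕ) - k) d * coeff k e else 0 := by
        rw [← Fin.sum_univ_eq_sum_range (fun k => if k ≤ i then _ else 0)]
        simp only [mulVec, dotProduct, lowerToeplitz, of_apply, ite_mul, zero_mul]
    _ = ∑ k ∈ range ((i : ℕ) + 1), coeff k e * coeff ((i : ℕ) - k) d := by
        rw [← sum_filter, hrange]
        exact sum_congr rfl fun k _ => mul_comm _ _
    _ = coeff i (e * d) := by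
        rw [coeff_mul, Nat.sum_antidiagonal_eq_sum_range_succ_mk]

theorem det_lowerToeplitz {d : R⟦X⟧} (hd : constantCoeff d = 1) (n : ℕ) :
    (lowerToeplitz d n).det = 1 := by
  rw [det_of_isLowerTriangular (lowerToeplitz d n) fun i j hij => if_neg (not_le.mpr hij)]
  exact prod_eq_one fun i _ => by simp [lowerToeplitz, hd]

theorem lowerToeplitz_submatrix_succ_castSucc (d : R⟦X⟧) (n : ℕ) :
    (lowerToeplitz d (n + 1)).submatrix Fin.succ Fin.castSucc = hessenberg d n := by
  ext i j
  simp only [submatrix_apply, lowerToeplitz, hessenberg, of_apply, Fin.val_succ, Fin.val_castSucc]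

theorem coeff_eq_neg_one_pow_mul_det_hessenberg {d e : R⟦X⟧} (he : e * d = 1)
    (hd : constantCoeff d = 1) (n : ℕ) :
    coeff n e = (-1) ^ n * (hessenberg d n).det := by
  set L := lowerToeplitz d (n + 1)
  have hLe : (L *ᵥ fun j => coeff j e) = Pi.single 0 1 := by
    ext i
    rw [lowerToeplitz_mulVec_coeff, he, coeff_one, Pi.single_apply]
    simp only [Fin.val_eq_zero_iff]
  have hcoeff : (fun j : Fin (n + 1) => coeff j e) = L.adjugate *ᵥ Pi.single 0 1 := by
    rw [← hLe, mulVec_mulVec, adjugate_mul, det_lowerToeplitz hd, one_smul, one_mulVec]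
  calc coeff n e = L.adjugate (Fin.last n) 0 := by
        simpa [mulVec_single] using congr_fun hcoeff (Fin.last n)
    _ = (-1) ^ n * (hessenberg d n).det := by
        rw [adjugate_fin_succ_eq_det_submatrix, Fin.succAbove_zero, Fin.succAbove_last,
          lowerToeplitz_submatrix_succ_castSucc, Fin.val_zero, Fin.val_last, zero_add]

end PowerSeries

end

theorem coeff_dSer_one (N m : ℕ) :
    coeff m (dSer N 1) = (N.factorial : ℂ) / ((N + m).factorial : ℂ) := by
  simp [dSer]

theorem stmt3_general (N : ℕ) (n : ℕ) :
    hB N n = (-1) ^ n * (n.factorial : ℂ) *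
      Matrix.det (Matrix.of fun i j : Fin n =>
        if (j : ℕ) = (i : ℕ) + 1 then 1
        else if (j : ℕ) ≤ (i : ℕ) then
          (N.factorial : ℂ) / ((N + ((i : ℕ) - (j : ℕ)) + 1).factorial : ℂ)
        else 0) := by
  have hd : constantCoeff (dSer N 1) = 1 := by
    simp [← coeff_zero_eq_constantCoeff_apply, coeff_dSer_one, Nat.factorial_ne_zero]
  have hmatrix : (Matrix.of fun i j : Fin n =>
      if (j : ℕ) = (i : ℕ) + 1 then 1
      else if (j : ℕ) ≤ (i : ℕ) then
        (N.factorial : ℂ) / ((N + ((i : ℕ) - (j : ℕ)) + 1).factorial : ℂ)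
      else 0) = hessenberg (dSer N 1) n := by
    ext i j
    simp only [hessenberg, Matrix.of_apply, coeff_dSer_one]
    split_ifs with hsup <;> try omega
    · rw [hsup, Nat.sub_self, Nat.add_zero, div_self (Nat.cast_ne_zero.mpr N.factorial_ne_zero)]
    · rw [show (i : ℕ) + 1 - j = i - j + 1 by omega, add_assoc]
    · rfl
  rw [hB, coeff_eq_neg_one_pow_mul_det_hessenberg (PowerSeries.inv_mul_cancel _ (by simp [hd])) hd,
    hmatrix]
  ring

theorem stmt3 (N : ℕ) (hN : 1 ≤ N) (n : ℕ) (hn : 1 ≤ n) :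
    hB N n = (-1) ^ n * (n.factorial : ℂ) *
      Matrix.det (Matrix.of fun i j : Fin n =>
        if (j : ℕ) = (i : ℕ) + 1 then 1
        else if (j : ℕ) ≤ (i : ℕ) then
          (N.factorial : ℂ) / ((N + ((i : ℕ) - (j : ℕ)) + 1).factorial : ℂ)
        else 0) :=
  stmt3_general N n
end

section
/- Let χ be a Dirichlet character of conductor f and N a positive integer. Then for all n ≥ 0, B_{N,n,χ} = Σ_{a=1}^{f} χ(a) · Σ_{k=0}^{n} binomial(n,k) · B_{N,k} · a^{n-k} · f^{k-N}. -/
open PowerSeries Finset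

/-
The generating function of `B_{N,n,χ}` is a sum over `a` of `χ(a) e^{at}` times `f^{-N} / dSer N f`,
and `dSer N f` is `dSer N 1` with `t` replaced by `f t`. Hence `1 / dSer N f` has coefficients
`B_{N,k} f^k / k!`, and multiplying by `e^{at}` is a binomial convolution of exponential
generating functions.
-/

theorem PowerSeries.rescale_inv {k : Type*} [Field k] (c : k) (φ : k⟦X⟧) :
    rescale c φ⁻¹ = (rescale c φ)⁻¹ := by
  have hconst : constantCoeff (rescale c φ) = constantCoeff φ := by
    rw [← coeff_zero_eq_constantCoeff_apply, coeff_rescale, pow_zero, one_mul,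
      coeff_zero_eq_constantCoeff_apply]
  by_cases h : constantCoeff φ = 0
  · rw [inv_eq_zero.mpr h, inv_eq_zero.mpr (hconst.trans h), map_zero]
  · rw [eq_inv_iff_mul_eq_one (hconst ▸ h), ← map_mul, PowerSeries.inv_mul_cancel φ h, map_one]

theorem factorial_mul_coeff_eSer_mul (a : ℂ) (g : ℂ⟦X⟧) (n : ℕ) :
    (n.factorial : ℂ) * coeff n (eSer a * g) =
      ∑ k ∈ range (n + 1), (n.choose k : ℂ) * (k.factorial * coeff k g) * a ^ (n - k) := by
  rw [mul_comm (eSer a), coeff_mul, Nat.sum_antidiagonal_eq_sum_range_succ_mk, mul_sum]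
  refine sum_congr rfl fun k hk => ?_
  have hkn : k ≤ n := Nat.lt_succ_iff.mp (mem_range.mp hk)
  have hfact : (n.factorial : ℂ) = n.choose k * k.factorial * (n - k).factorial := by
    exact_mod_cast (Nat.choose_mul_factorial_mul_factorial hkn).symm
  have hne : ((n - k).factorial : ℂ) ≠ 0 := by exact_mod_cast Nat.factorial_ne_zero _
  rw [eSer, coeff_mk, hfact]
  field_simp

theorem rescale_dSer_one (N f : ℕ) : rescale (f : ℂ) (dSer N 1) = dSer N f := by
  ext m
  simp only [coeff_rescale, dSer, coeff_mk, Nat.cast_one, one_pow]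
  ring

theorem factorial_mul_coeff_eSer_mul_inv_dSer (N f n : ℕ) (a : ℂ) :
    (n.factorial : ℂ) * coeff n (eSer a * (dSer N f)⁻¹) =
      ∑ k ∈ range (n + 1), (n.choose k : ℂ) * hB N k * a ^ (n - k) * (f : ℂ) ^ k := by
  rw [← rescale_dSer_one, ← rescale_inv, factorial_mul_coeff_eSer_mul]
  refine sum_congr rfl fun k _ => ?_
  rw [coeff_rescale, hB]
  ring

theorem stmt6_general (N f : ℕ) (hf : 0 < f) (χ : DirichletCharacter ℂ f) (n : ℕ) :
    gB N f χ n = ∑ a ∈ Finset.Icc 1 f, χ (a : ZMod f) *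
      ∑ k ∈ Finset.range (n + 1), (n.choose k : ℂ) * hB N k * (a : ℂ) ^ (n - k) *
        (f : ℂ) ^ ((k : ℤ) - (N : ℤ)) := by
  have hf0 : (f : ℂ) ≠ 0 := by exact_mod_cast hf.ne'
  have hinner (a : ℕ) : ∑ k ∈ range (n + 1), (n.choose k : ℂ) * hB N k * (a : ℂ) ^ (n - k) *
      (f : ℂ) ^ ((k : ℤ) - (N : ℤ)) =
      ((f : ℂ) ^ N)⁻¹ * (n.factorial * coeff n (eSer a * (dSer N f)⁻¹)) := by
    rw [factorial_mul_coeff_eSer_mul_inv_dSer, mul_sum]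
    refine sum_congr rfl fun k _ => ?_
    rw [zpow_sub₀ hf0, zpow_natCast, zpow_natCast, div_eq_mul_inv]
    ring
  simp only [hinner]
  simp only [gB, gBP, zero_add, sum_mul, mul_assoc, map_smul, map_sum, coeff_C_mul,
    smul_eq_mul, mul_sum]
  refine sum_congr rfl fun a _ => ?_
  ring

theorem stmt6 (N f : ℕ) (hN : 1 ≤ N) (hf : 0 < f) (χ : DirichletCharacter ℂ f)
    (hχ : χ.IsPrimitive) (n : ℕ) :
    gB N f χ n = ∑ a ∈ Finset.Icc 1 f, χ (a : ZMod f) *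
      ∑ k ∈ Finset.range (n + 1), (n.choose k : ℂ) * hB N k * (a : ℂ) ^ (n - k) *
        (f : ℂ) ^ ((k : ℤ) - (N : ℤ)) :=
  stmt6_general N f hf χ n
end
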